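/- Let k be a positive integer and let u : (0,1) → {−1,1} be piecewise constant with at most k jumps, i.e. there exist points 0 = t₀ ≤ t₁ ≤ … ≤ t_k ≤ t_{k+1} = 1 such that u is constant on each nonempty open interval (t_i, t_{i+1}). Assume ∫₀¹ u(t) dt = 0 and set w(y) = ∫₀^y u(t) dt. Then ∫₀¹ w(y)² dy ≥ 1/(12k²), with equality if and only if u = u_k or u = −u_k almost everywhere. -/

import Mathlib

open MeasureTheory intervalIntegral

/-- The lamellar configuration `u_k`: equals `(-1)^j` on `(y_j, y_{j+1})` where
`y_j = (2j-1)/(2k)`, `y_0 = 0`, `y_{k+1} = 1`. -/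
noncomputable def uk (k : ℕ) (t : ℝ) : ℝ := (-1 : ℝ) ^ ⌊(k : ℝ) * t + 1 / 2⌋

/-!
On a piece `(t i, t (i+1))` of the partition, `w` is affine with slope `±1`, so
`|w (t (i+1)) - w (t i)|` is the length of the piece and `∫ w²` over it is
`|w (t (i+1))³ - w (t i)³| / 3`. With `e j = w (t j)` the problem becomes discrete: minimise
`∑ |e (j+1)³ - e j³|` subject to `e 0 = e (k+1) = 0` and `∑ |e (j+1) - e j| = 1`.
Comparing `|b³ - a³|` with the tangent of `x ↦ x³` at `L = 1/k` writes it as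
`(3 L² |b - a| - 2 L³) / 4` plus a nonnegative defect that vanishes iff `|b - a| = L` and
`a + b = 0`; summed over the pieces this gives `1/(4k²)` plus the defects. Equality thus forces
`e j = ±(-1)^(j+1)/(2k)`, the node values of `∫₀^· u_k`, and the node values determine both the
partition and the signs of `u`.
-/

open Set

/-- With `ℓ = |b - a|`: `(ℓ - L)² (ℓ + 2L) = ℓ³ - (3 L² ℓ - 2 L³)` is the gap between `ℓ³` and
its tangent at `L`, and `3 ℓ (a + b)² = 4 |b³ - a³| - ℓ³`. -/
noncomputable def cubeDefect (L a b : ℝ) : ℝ :=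
  ((|b - a| - L) ^ 2 * (|b - a| + 2 * L) + 3 * |b - a| * (a + b) ^ 2) / 4

theorem abs_pow_three_sub_pow_three_eq (L a b : ℝ) :
    |b ^ 3 - a ^ 3| = (3 * L ^ 2 * |b - a| - 2 * L ^ 3) / 4 + cubeDefect L a b := by
  have hfactor : b ^ 3 - a ^ 3 = (b - a) * (|b - a| ^ 2 + 3 * (a + b) ^ 2) / 4 := by
    rw [sq_abs]; ring
  have hpos : (0 : ℝ) ≤ |b - a| ^ 2 + 3 * (a + b) ^ 2 := by positivity
  rw [hfactor, abs_div, abs_mul, abs_of_nonneg hpos, abs_of_pos (four_pos : (0 : ℝ) < 4),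
    cubeDefect]
  ring

theorem abs_pow_three_eq (L b : ℝ) :
    |b ^ 3| = (3 * L ^ 2 * |b| - L ^ 3) / 4 + cubeDefect L (-b) b / 2 := by
  have h := abs_pow_three_sub_pow_three_eq L (-b) b
  rw [show b ^ 3 - (-b) ^ 3 = 2 * b ^ 3 by ring, show b - -b = 2 * b by ring, abs_mul, abs_mul,
    abs_two] at h
  linarith

theorem cubeDefect_nonneg {L : ℝ} (hL : 0 ≤ L) (a b : ℝ) : 0 ≤ cubeDefect L a b := by
  unfold cubeDefect; positivity

theorem cubeDefect_eq_zero_iff {L : ℝ} (hL : 0 < L) (a b : ℝ) :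
    cubeDefect L a b = 0 ↔ |b - a| = L ∧ a + b = 0 := by
  constructor
  · intro h
    have h1 : 0 ≤ (|b - a| - L) ^ 2 * (|b - a| + 2 * L) := by positivity
    have h2 : 0 ≤ 3 * |b - a| * (a + b) ^ 2 := by positivity
    unfold cubeDefect at h
    have hlen : |b - a| = L := by
      have : (|b - a| - L) ^ 2 * (|b - a| + 2 * L) = 0 := by linarith
      rcases mul_eq_zero.1 this with h | h
      · linarith [pow_eq_zero_iff (n := 2) two_ne_zero |>.1 h]
      · linarith [abs_nonneg (b - a)]
    refine ⟨hlen, ?_⟩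
    have : 3 * |b - a| * (a + b) ^ 2 = 0 := by linarith
    rw [hlen] at this
    simpa [hL.ne'] using this
  · rintro ⟨hlen, hsum⟩
    simp [cubeDefect, hlen, hsum]

/-- The end piece from `0` to `e 1` counts as half of the symmetric piece from `-e 1` to `e 1`,
and likewise at `e k`. -/
noncomputable def lamellarDefect (k : ℕ) (e : ℕ → ℝ) : ℝ :=
  cubeDefect (1 / k) (-e 1) (e 1) / 2 + cubeDefect (1 / k) (-e k) (e k) / 2 +
    ∑ j ∈ Finset.Ico 1 k, cubeDefect (1 / k) (e j) (e (j + 1))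

theorem lamellarDefect_nonneg (k : ℕ) (e : ℕ → ℝ) : 0 ≤ lamellarDefect k e := by
  have hL : (0 : ℝ) ≤ 1 / k := by positivity
  unfold lamellarDefect
  have := Finset.sum_nonneg fun j (_ : j ∈ Finset.Ico 1 k) =>
    cubeDefect_nonneg hL (e j) (e (j + 1))
  linarith [cubeDefect_nonneg hL (-e 1) (e 1), cubeDefect_nonneg hL (-e k) (e k)]

theorem sum_range_succ_eq_add_sum_Ico_add {M : Type*} [AddCommMonoid M] {k : ℕ} (hk : 1 ≤ k)
    (f : ℕ → M) : ∑ j ∈ Finset.range (k + 1), f j = f 0 + ∑ j ∈ Finset.Ico 1 k, f j + f k := by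
  rw [Finset.sum_range_succ, Finset.range_eq_Ico, Finset.sum_eq_sum_Ico_succ_bot (by omega)]

theorem sum_abs_pow_three_sub_eq {k : ℕ} (hk : 1 ≤ k) {e : ℕ → ℝ} (h0 : e 0 = 0)
    (hlast : e (k + 1) = 0) (hvar : ∑ j ∈ Finset.range (k + 1), |e (j + 1) - e j| = 1) :
    ∑ j ∈ Finset.range (k + 1), |e (j + 1) ^ 3 - e j ^ 3| =
      1 / (4 * k ^ 2) + lamellarDefect k e := by
  set L : ℝ := 1 / k
  have hkL : (k : ℝ) * L = 1 := by simp [L]; field_simp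
  rw [sum_range_succ_eq_add_sum_Ico_add hk] at hvar ⊢
  simp only [h0, hlast, sub_zero, zero_sub, abs_neg, zero_pow three_ne_zero] at hvar ⊢
  rw [abs_pow_three_eq L, abs_pow_three_eq L,
    Finset.sum_congr rfl fun j _ => abs_pow_three_sub_pow_three_eq L (e j) (e (j + 1)),
    Finset.sum_add_distrib, ← Finset.sum_div, Finset.sum_sub_distrib, ← Finset.mul_sum,
    Finset.sum_const, Nat.card_Ico, nsmul_eq_mul, Nat.cast_sub hk, lamellarDefect]
  have hsq : 1 / (4 * (k : ℝ) ^ 2) = L ^ 2 / 4 := by simp [L]; ring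
  rw [hsq]
  linear_combination (3 * L ^ 2 / 4) * hvar - (L ^ 2 / 2) * hkL

/-- `w_k (y_j)`, where `w_k` is the primitive of `u_k`. -/
noncomputable def lamellarHeight (k j : ℕ) : ℝ :=
  if j = 0 ∨ k < j then 0 else (-1) ^ (j + 1) / (2 * k)

theorem lamellarHeight_of_mem_Icc {k j : ℕ} (hj : j ∈ Icc 1 k) :
    lamellarHeight k j = (-1) ^ (j + 1) / (2 * k) := by
  rw [lamellarHeight, if_neg (by grind)]

theorem abs_lamellarHeight {k j : ℕ} (hj : j ∈ Icc 1 k) :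
    |lamellarHeight k j| = 1 / (2 * k) := by
  simp [lamellarHeight_of_mem_Icc hj, abs_div]

theorem lamellarHeight_succ {k j : ℕ} (hj : j ∈ Finset.Ico 1 k) :
    lamellarHeight k (j + 1) = -lamellarHeight k j := by
  simp only [Finset.mem_Ico] at hj
  rw [lamellarHeight_of_mem_Icc ⟨by omega, by omega⟩,
    lamellarHeight_of_mem_Icc ⟨by omega, by omega⟩, pow_succ]
  ring

theorem lamellarDefect_lamellarHeight {k : ℕ} (hk : 1 ≤ k) :
    lamellarDefect k (lamellarHeight k) = 0 := by
  have hL : (0 : ℝ) < 1 / k := one_div_pos.2 (by exact_mod_cast hk)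
  have hflip : ∀ a : ℝ, |a| = 1 / (2 * k) → cubeDefect (1 / k) a (-a) = 0 := fun a ha =>
    (cubeDefect_eq_zero_iff hL a (-a)).2
      ⟨by rw [show -a - a = -(2 * a) by ring, abs_neg, abs_mul, abs_two, ha]; field_simp, by ring⟩
  have hend : ∀ j ∈ Icc 1 k,
      cubeDefect (1 / k) (-lamellarHeight k j) (lamellarHeight k j) = 0 := fun j hj => by
    have := hflip (-lamellarHeight k j) (by rw [abs_neg, abs_lamellarHeight hj])
    rwa [neg_neg] at this
  rw [lamellarDefect, hend 1 ⟨le_rfl, hk⟩, hend k ⟨hk, le_rfl⟩,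
    Finset.sum_eq_zero fun j hj => ?_]
  · ring
  · rw [lamellarHeight_succ hj]
    exact hflip _ (abs_lamellarHeight (by simp at hj ⊢; omega))

theorem exists_eq_mul_lamellarHeight_of_lamellarDefect_eq_zero {k : ℕ} (hk : 1 ≤ k)
    {e : ℕ → ℝ} (h0 : e 0 = 0) (hlast : e (k + 1) = 0) (hD : lamellarDefect k e = 0) :
    ∃ σ : ℝ, |σ| = 1 ∧ ∀ j ≤ k + 1, e j = σ * lamellarHeight k j := by
  have hL : (0 : ℝ) < 1 / k := one_div_pos.2 (by exact_mod_cast hk)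
  have hL' := hL.le
  have hinterior := Finset.sum_nonneg fun j (_ : j ∈ Finset.Ico 1 k) =>
    cubeDefect_nonneg hL' (e j) (e (j + 1))
  unfold lamellarDefect at hD
  have hfirst : cubeDefect (1 / k) (-e 1) (e 1) = 0 := by
    linarith [cubeDefect_nonneg hL' (-e 1) (e 1), cubeDefect_nonneg hL' (-e k) (e k)]
  have hflip : ∀ j ∈ Finset.Ico 1 k, e (j + 1) = -e j := by
    have hsum : ∑ j ∈ Finset.Ico 1 k, cubeDefect (1 / k) (e j) (e (j + 1)) = 0 := by
      linarith [cubeDefect_nonneg hL' (-e 1) (e 1), cubeDefect_nonneg hL' (-e k) (e k)]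
    intro j hj
    have := ((cubeDefect_eq_zero_iff hL _ _).1
      ((Finset.sum_eq_zero_iff_of_nonneg fun j _ => cubeDefect_nonneg hL' _ _).1 hsum j hj)).2
    linarith
  have he1 : |e 1| = 1 / (2 * k) := by
    have := ((cubeDefect_eq_zero_iff hL _ _).1 hfirst).1
    rw [sub_neg_eq_add, ← two_mul, abs_mul, abs_two] at this
    field_simp at this ⊢
    linarith
  have halt : ∀ j ∈ Icc 1 k, e j = (-1) ^ (j + 1) * e 1 := by
    intro j ⟨hj1, hjk⟩
    induction j, hj1 using Nat.le_induction with
    | base => ring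
    | succ j hj ih =>
      rw [hflip j (by simp; omega), ih (by omega), pow_succ]
      ring
  refine ⟨2 * k * e 1, ?_, fun j hj => ?_⟩
  · rw [abs_mul, he1, abs_of_pos (by positivity)]
    field_simp
  · rcases Nat.eq_zero_or_pos j with rfl | hj0
    · simp [h0, lamellarHeight]
    rcases hj.lt_or_eq with hj | rfl
    · rw [halt j ⟨hj0, by omega⟩, lamellarHeight_of_mem_Icc ⟨hj0, by omega⟩]
      field_simp
    · simp [hlast, lamellarHeight]

theorem mul_integral_sq_affine (A c a b : ℝ) :
    c * ∫ y in a..b, (A + c * (y - a)) ^ 2 = ((A + c * (b - a)) ^ 3 - A ^ 3) / 3 := by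
  rw [← intervalIntegral.integral_const_mul,
    integral_eq_sub_of_hasDerivAt (f := fun y => (A + c * (y - a)) ^ 3 / 3)]
  · ring
  · intro y _
    refine (((((hasDerivAt_id' y).sub_const a).const_mul c).const_add A).fun_pow 3).div_const 3
      |>.congr_deriv ?_
    norm_num
    ring
  · exact (by fun_prop : Continuous fun y => c * (A + c * (y - a)) ^ 2).intervalIntegrable _ _

theorem midpoint_mem_Ioo {a b : ℝ} (h : a < b) : (a + b) / 2 ∈ Ioo a b :=
  ⟨left_lt_add_div_two.2 h, add_div_two_lt_right.2 h⟩

structure IsStepPartition (n : ℕ) (t : ℕ → ℝ) (u : ℝ → ℝ) : Prop where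
  mono : ∀ i < n, t i ≤ t (i + 1)
  const : ∀ i < n, ∀ x ∈ Ioo (t i) (t (i + 1)), ∀ y ∈ Ioo (t i) (t (i + 1)), u x = u y

/-- The value of `u` on the `i`-th piece, read at its midpoint (junk on an empty piece). -/
noncomputable def pieceValue (t : ℕ → ℝ) (u : ℝ → ℝ) (i : ℕ) : ℝ := u ((t i + t (i + 1)) / 2)

namespace IsStepPartition

variable {n : ℕ} {t : ℕ → ℝ} {u : ℝ → ℝ}

theorem le_of_le (h : IsStepPartition n t u) {i j : ℕ} (hij : i ≤ j) (hjn : j ≤ n) :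
    t i ≤ t j := by
  induction j, hij using Nat.le_induction with
  | base => rfl
  | succ j _ ih => exact (ih (by omega)).trans (h.mono j (by omega))

theorem mem_Icc (h : IsStepPartition n t u) {i : ℕ} (hi : i ≤ n) : t i ∈ Icc (t 0) (t n) :=
  ⟨h.le_of_le (Nat.zero_le i) hi, h.le_of_le hi le_rfl⟩

theorem eq_pieceValue (h : IsStepPartition n t u) {i : ℕ} (hi : i < n) {s : ℝ}
    (hs : s ∈ Ioo (t i) (t (i + 1))) : u s = pieceValue t u i :=
  h.const i hi s hs _ (midpoint_mem_Ioo (hs.1.trans hs.2))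

theorem eqOn_pieceValue (h : IsStepPartition n t u) {i : ℕ} (hi : i < n) {y : ℝ}
    (hy : y ∈ Icc (t i) (t (i + 1))) : EqOn u (fun _ => pieceValue t u i) (uIoo (t i) y) := by
  rw [uIoo_of_le hy.1]
  exact fun s hs => h.eq_pieceValue hi ⟨hs.1, hs.2.trans_le hy.2⟩

theorem integral_eq_pieceValue_mul (h : IsStepPartition n t u) {i : ℕ} (hi : i < n) {y : ℝ}
    (hy : y ∈ Icc (t i) (t (i + 1))) : ∫ s in t i..y, u s = pieceValue t u i * (y - t i) := by
  rw [integral_congr_uIoo (h.eqOn_pieceValue hi hy), intervalIntegral.integral_const, smul_eq_mul,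
    mul_comm]

theorem intervalIntegrable (h : IsStepPartition n t u) {a b : ℝ} (ha : a ∈ Icc (t 0) (t n))
    (hb : b ∈ Icc (t 0) (t n)) : IntervalIntegrable u volume a b := by
  have hpiece : ∀ i < n, IntervalIntegrable u volume (t i) (t (i + 1)) := fun i hi =>
    intervalIntegrable_const.congr_uIoo (h.eqOn_pieceValue hi ⟨h.mono i hi, le_rfl⟩).symm
  exact (IntervalIntegrable.trans_iterate hpiece).mono_set
    (uIcc_subset_uIcc (mem_uIcc_of_le ha.1 ha.2) (mem_uIcc_of_le hb.1 hb.2))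

theorem primitive_eq (h : IsStepPartition n t u) {i : ℕ} (hi : i < n) {y : ℝ}
    (hy : y ∈ Icc (t i) (t (i + 1))) :
    ∫ s in t 0..y, u s = (∫ s in t 0..t i, u s) + pieceValue t u i * (y - t i) := by
  have hti := h.mem_Icc hi.le
  have hy' : y ∈ Icc (t 0) (t n) := ⟨hti.1.trans hy.1, hy.2.trans (h.mem_Icc hi).2⟩
  rw [← integral_add_adjacent_intervals (h.intervalIntegrable (h.mem_Icc (Nat.zero_le _)) hti)
    (h.intervalIntegrable hti hy'), h.integral_eq_pieceValue_mul hi hy]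

theorem primitive_succ_sub (h : IsStepPartition n t u) {i : ℕ} (hi : i < n) :
    (∫ s in t 0..t (i + 1), u s) - ∫ s in t 0..t i, u s = pieceValue t u i * (t (i + 1) - t i) := by
  rw [h.primitive_eq hi ⟨h.mono i hi, le_rfl⟩]
  ring

theorem abs_pieceValue (h : IsStepPartition n t u) (hu : ∀ s ∈ Ioo (t 0) (t n), |u s| = 1)
    {i : ℕ} (hi : i < n) (hlt : t i < t (i + 1)) : |pieceValue t u i| = 1 := by
  have hmid := midpoint_mem_Ioo hlt
  exact hu _ ⟨(h.mem_Icc hi.le).1.trans_lt hmid.1, hmid.2.trans_le (h.mem_Icc hi).2⟩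

theorem abs_primitive_succ_sub (h : IsStepPartition n t u) (hu : ∀ s ∈ Ioo (t 0) (t n), |u s| = 1)
    {i : ℕ} (hi : i < n) :
    |(∫ s in t 0..t (i + 1), u s) - ∫ s in t 0..t i, u s| = t (i + 1) - t i := by
  rw [h.primitive_succ_sub hi, abs_mul]
  rcases (h.mono i hi).eq_or_lt with heq | hlt
  · simp [heq]
  · rw [h.abs_pieceValue hu hi hlt, one_mul, abs_of_pos (sub_pos.2 hlt)]

theorem sum_abs_primitive_succ_sub (h : IsStepPartition n t u)
    (hu : ∀ s ∈ Ioo (t 0) (t n), |u s| = 1) :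
    ∑ i ∈ Finset.range n, |(∫ s in t 0..t (i + 1), u s) - ∫ s in t 0..t i, u s| = t n - t 0 := by
  rw [Finset.sum_congr rfl fun i hi => h.abs_primitive_succ_sub hu (Finset.mem_range.1 hi),
    Finset.sum_range_sub]

theorem integral_sq_primitive_piece (h : IsStepPartition n t u)
    (hu : ∀ s ∈ Ioo (t 0) (t n), |u s| = 1) {i : ℕ} (hi : i < n) :
    ∫ y in t i..t (i + 1), (∫ s in t 0..y, u s) ^ 2 =
      |(∫ s in t 0..t (i + 1), u s) ^ 3 - (∫ s in t 0..t i, u s) ^ 3| / 3 := by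
  have hle := h.mono i hi
  rw [h.primitive_eq hi ⟨hle, le_rfl⟩]
  rcases hle.eq_or_lt with heq | hlt
  · simp [heq]
  have hpiece : EqOn (fun y => (∫ s in t 0..y, u s) ^ 2)
      (fun y => ((∫ s in t 0..t i, u s) + pieceValue t u i * (y - t i)) ^ 2)
      (uIcc (t i) (t (i + 1))) := fun y hy => by
    rw [uIcc_of_le hle] at hy
    simp only [h.primitive_eq hi hy]
  have hI := mul_integral_sq_affine (∫ s in t 0..t i, u s) (pieceValue t u i) (t i) (t (i + 1))
  rw [integral_congr hpiece]
  calc _ = |pieceValue t u i * ∫ y in t i..t (i + 1),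
        ((∫ s in t 0..t i, u s) + pieceValue t u i * (y - t i)) ^ 2| := by
        rw [abs_mul, h.abs_pieceValue hu hi hlt, one_mul,
          abs_of_nonneg (integral_nonneg hle fun _ _ => sq_nonneg _)]
    _ = _ := by rw [hI, abs_div, abs_of_pos (by norm_num : (0 : ℝ) < 3)]

theorem continuousOn_primitive (h : IsStepPartition n t u) (htn : t 0 ≤ t n) :
    ContinuousOn (fun y => ∫ s in t 0..y, u s) (uIcc (t 0) (t n)) :=
  continuousOn_primitive_interval' (h.intervalIntegrable (left_mem_Icc.2 htn)
    (right_mem_Icc.2 htn)) left_mem_uIcc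

theorem integral_sq_primitive (h : IsStepPartition n t u)
    (hu : ∀ s ∈ Ioo (t 0) (t n), |u s| = 1) :
    ∫ y in t 0..t n, (∫ s in t 0..y, u s) ^ 2 = ∑ i ∈ Finset.range n,
      |(∫ s in t 0..t (i + 1), u s) ^ 3 - (∫ s in t 0..t i, u s) ^ 3| / 3 := by
  have htn := h.le_of_le (Nat.zero_le n) le_rfl
  have hint : IntervalIntegrable (fun y => (∫ s in t 0..y, u s) ^ 2) volume (t 0) (t n) :=
    ((h.continuousOn_primitive htn).pow 2).intervalIntegrable
  rw [← sum_integral_adjacent_intervals fun i hi => hint.mono_set (uIcc_subset_uIcc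
    (mem_uIcc_of_le (h.mem_Icc hi.le).1 (h.mem_Icc hi.le).2)
    (mem_uIcc_of_le (h.mem_Icc hi).1 (h.mem_Icc hi).2))]
  exact Finset.sum_congr rfl fun i hi => h.integral_sq_primitive_piece hu (Finset.mem_range.1 hi)

end IsStepPartition

theorem exists_mem_Ioo_of_forall_ne (t : ℕ → ℝ) {n : ℕ} {s : ℝ} (hs : s ∈ Ioo (t 0) (t n))
    (hne : ∀ j, s ≠ t j) : ∃ i < n, s ∈ Ioo (t i) (t (i + 1)) := by
  induction n with
  | zero => exact absurd (hs.1.trans hs.2) (lt_irrefl _)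
  | succ n ih =>
    rcases (hne n).lt_or_gt with hlt | hgt
    · obtain ⟨i, hi, his⟩ := ih ⟨hs.1, hlt⟩
      exact ⟨i, by omega, his⟩
    · exact ⟨n, by omega, hgt, hs.2⟩

theorem ae_exists_mem_Ioo (t : ℕ → ℝ) (n : ℕ) :
    ∀ᵐ s ∂volume.restrict (Ioo (t 0) (t n)), ∃ i < n, s ∈ Ioo (t i) (t (i + 1)) := by
  rw [ae_restrict_iff' measurableSet_Ioo]
  filter_upwards [(countable_range t).ae_notMem volume] with s hs hsI
  exact exists_mem_Ioo_of_forall_ne t hsI fun j hj => hs ⟨j, hj.symm⟩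

theorem IsStepPartition.ae_eq_mul_of_primitive_eq {n : ℕ} {t t' : ℕ → ℝ} {u v : ℝ → ℝ} {σ : ℝ}
    (hP : IsStepPartition n t u) (hQ : IsStepPartition n t' v)
    (hu : ∀ s ∈ Ioo (t 0) (t n), |u s| = 1) (hv : ∀ s ∈ Ioo (t' 0) (t' n), |v s| = 1)
    (hσ : |σ| = 1) (h0 : t 0 = t' 0)
    (hnodes : ∀ j ≤ n, ∫ s in t 0..t j, u s = σ * ∫ s in t' 0..t' j, v s) :
    ∀ᵐ s ∂volume.restrict (Ioo (t 0) (t n)), u s = σ * v s := by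
  have hincr : ∀ i < n, (∫ s in t 0..t (i + 1), u s) - ∫ s in t 0..t i, u s =
      σ * ((∫ s in t' 0..t' (i + 1), v s) - ∫ s in t' 0..t' i, v s) := fun i hi => by
    rw [hnodes i hi.le, hnodes (i + 1) hi, mul_sub]
  have ht : ∀ j ≤ n, t j = t' j := by
    intro j hj
    induction j with
    | zero => exact h0
    | succ j ih =>
      have hlen := hP.abs_primitive_succ_sub hu hj
      rw [hincr j hj, abs_mul, hσ, one_mul, hQ.abs_primitive_succ_sub hv hj] at hlen
      linarith [ih (by omega)]
  filter_upwards [ae_exists_mem_Ioo t n] with s ⟨i, hi, hs⟩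
  have hc : pieceValue t u i = σ * pieceValue t' v i := by
    have hlen : t (i + 1) - t i ≠ 0 := (sub_pos.2 (hs.1.trans hs.2)).ne'
    have := hincr i hi
    rw [hP.primitive_succ_sub hi, hQ.primitive_succ_sub hi, ← ht i hi.le, ← ht (i + 1) hi,
      ← mul_assoc] at this
    exact mul_right_cancel₀ hlen this
  rw [hP.eq_pieceValue hi hs, hQ.eq_pieceValue hi (by rwa [← ht i hi.le, ← ht (i + 1) hi]), hc]

theorem integral_sq_primitive_eq_sq_mul {a b σ : ℝ} {u v : ℝ → ℝ} (hab : a ≤ b)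
    (h : ∀ᵐ s ∂volume.restrict (Ioo a b), u s = σ * v s) :
    ∫ y in a..b, (∫ s in a..y, u s) ^ 2 = σ ^ 2 * ∫ y in a..b, (∫ s in a..y, v s) ^ 2 := by
  rw [← intervalIntegral.integral_const_mul]
  refine integral_congr fun y hy => ?_
  rw [uIcc_of_le hab] at hy
  have hprim : ∫ s in a..y, u s = σ * ∫ s in a..y, v s := by
    rw [← intervalIntegral.integral_const_mul]
    refine integral_congr_ae_restrict ?_
    rw [uIoc_of_le hy.1, ← Measure.restrict_congr_set Ioo_ae_eq_Ioc]
    exact ae_restrict_of_ae_restrict_of_subset (Ioo_subset_Ioo_right hy.2) h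
  simp only [hprim]
  ring

noncomputable def lamellarNode (k j : ℕ) : ℝ :=
  if j = 0 then 0 else if j ≤ k then (2 * j - 1) / (2 * k) else 1

theorem lamellarNode_zero (k : ℕ) : lamellarNode k 0 = 0 := if_pos rfl

theorem lamellarNode_of_lt {k j : ℕ} (hj : k < j) : lamellarNode k j = 1 := by
  rw [lamellarNode, if_neg (by omega), if_neg (by omega)]

theorem lamellarNode_of_mem_Icc {k j : ℕ} (hj : j ∈ Icc 1 k) :
    lamellarNode k j = (2 * j - 1) / (2 * k) := by
  rw [lamellarNode, if_neg (by grind), if_pos hj.2]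

theorem uk_eq_of_mem_Ioo {k j : ℕ} (hk : 1 ≤ k) (hj : j ≤ k) {s : ℝ}
    (hs : s ∈ Ioo (lamellarNode k j) (lamellarNode k (j + 1))) : uk k s = (-1) ^ j := by
  have hk0 : (0 : ℝ) < k := by exact_mod_cast hk
  have hlo : (2 * j - 1) / (2 * k) ≤ lamellarNode k j := by
    rcases Nat.eq_zero_or_pos j with rfl | hj0
    · rw [lamellarNode_zero]
      exact div_nonpos_of_nonpos_of_nonneg (by norm_num) (by positivity)
    · rw [lamellarNode_of_mem_Icc ⟨hj0, hj⟩]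
  have hhi : lamellarNode k (j + 1) ≤ (2 * j + 1) / (2 * k) := by
    rcases hj.lt_or_eq with hj | rfl
    · rw [lamellarNode_of_mem_Icc (j := j + 1) ⟨by omega, by omega⟩]
      exact le_of_eq (by push_cast; ring)
    · rw [lamellarNode_of_lt (Nat.lt_succ_self j), le_div_iff₀ (by positivity)]
      linarith
  have h1 := hlo.trans_lt hs.1
  have h2 := hs.2.trans_le hhi
  rw [div_lt_iff₀ (by positivity)] at h1
  rw [lt_div_iff₀ (by positivity)] at h2
  have hfloor : ⌊(k : ℝ) * s + 1 / 2⌋ = j := by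
    rw [Int.floor_eq_iff]
    push_cast
    constructor <;> nlinarith
  rw [uk, hfloor, zpow_natCast]

theorem abs_uk (k : ℕ) (s : ℝ) : |uk k s| = 1 := by
  simp [uk]

theorem lamellarNode_lt_succ {k j : ℕ} (hk : 1 ≤ k) (hj : j ≤ k) :
    lamellarNode k j < lamellarNode k (j + 1) := by
  have hk0 : (0 : ℝ) < k := by exact_mod_cast hk
  rcases Nat.eq_zero_or_pos j with rfl | hj0
  · rw [lamellarNode_zero, lamellarNode_of_mem_Icc ⟨le_rfl, hk⟩]
    norm_num
    positivity
  rcases hj.lt_or_eq with hjk | rfl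
  · rw [lamellarNode_of_mem_Icc (j := j + 1) ⟨by omega, by omega⟩,
      lamellarNode_of_mem_Icc ⟨hj0, hj⟩]
    gcongr
    linarith
  · rw [lamellarNode_of_mem_Icc ⟨hj0, hj⟩, lamellarNode_of_lt (Nat.lt_succ_self j),
      div_lt_one (by positivity)]
    linarith

theorem lamellarHeight_succ_sub {k j : ℕ} (hk : 1 ≤ k) (hj : j ≤ k) :
    lamellarHeight k (j + 1) - lamellarHeight k j =
      (-1) ^ j * (lamellarNode k (j + 1) - lamellarNode k j) := by
  rcases Nat.eq_zero_or_pos j with rfl | hj0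
  · rw [lamellarHeight_of_mem_Icc ⟨le_rfl, hk⟩, lamellarNode_of_mem_Icc ⟨le_rfl, hk⟩,
      lamellarNode_zero]
    simp [lamellarHeight]
    ring
  rcases hj.lt_or_eq with hjk | rfl
  · rw [lamellarHeight_of_mem_Icc (j := j + 1) ⟨by omega, by omega⟩,
      lamellarHeight_of_mem_Icc ⟨hj0, hj⟩,
      lamellarNode_of_mem_Icc (j := j + 1) ⟨by omega, by omega⟩,
      lamellarNode_of_mem_Icc ⟨hj0, hj⟩, pow_succ, pow_succ]
    push_cast
    field_simp
    ring
  · rw [lamellarHeight_of_mem_Icc ⟨hj0, hj⟩, lamellarNode_of_mem_Icc ⟨hj0, hj⟩,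
      lamellarNode_of_lt (Nat.lt_succ_self j), pow_succ]
    simp only [lamellarHeight, lt_add_iff_pos_right, zero_lt_one, or_true, if_true]
    field_simp
    ring

theorem isStepPartition_uk {k : ℕ} (hk : 1 ≤ k) :
    IsStepPartition (k + 1) (lamellarNode k) (uk k) where
  mono j hj := (lamellarNode_lt_succ hk (by omega)).le
  const j hj x hx y hy := by
    rw [uk_eq_of_mem_Ioo hk (by omega) hx, uk_eq_of_mem_Ioo hk (by omega) hy]

theorem integral_uk_lamellarNode {k : ℕ} (hk : 1 ≤ k) (j : ℕ) :
    ∫ s in lamellarNode k 0..lamellarNode k j, uk k s = lamellarHeight k j := by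
  have hP := isStepPartition_uk hk
  have hle : ∀ j ≤ k + 1, ∫ s in lamellarNode k 0..lamellarNode k j, uk k s =
      lamellarHeight k j := by
    intro j hj
    induction j with
    | zero => simp [lamellarHeight]
    | succ j ih =>
      have hpiece : pieceValue (lamellarNode k) (uk k) j = (-1) ^ j :=
        uk_eq_of_mem_Ioo hk (by omega) (midpoint_mem_Ioo (lamellarNode_lt_succ hk (by omega)))
      have := hP.primitive_succ_sub (i := j) (by omega)
      rw [ih (by omega), hpiece] at this
      linarith [lamellarHeight_succ_sub hk (j := j) (by omega)]
  rcases le_or_gt j (k + 1) with hj | hj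
  · exact hle j hj
  · rw [lamellarNode_of_lt (by omega : k < j), ← lamellarNode_of_lt (Nat.lt_succ_self k),
      hle (k + 1) le_rfl]
    simp [lamellarHeight, hj.trans' (Nat.lt_succ_self k)]

theorem integral_sq_primitive_uk {k : ℕ} (hk : 1 ≤ k) :
    ∫ y in (0 : ℝ)..1, (∫ s in (0 : ℝ)..y, uk k s) ^ 2 = 1 / (12 * (k : ℝ) ^ 2) := by
  have hP := isStepPartition_uk hk
  have hu : ∀ s ∈ Ioo (lamellarNode k 0) (lamellarNode k (k + 1)), |uk k s| = 1 :=
    fun s _ => abs_uk k s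
  have henergy := hP.integral_sq_primitive hu
  have hvar := hP.sum_abs_primitive_succ_sub hu
  simp only [integral_uk_lamellarNode hk] at henergy hvar
  rw [lamellarNode_zero, lamellarNode_of_lt (Nat.lt_succ_self k)] at henergy hvar
  rw [henergy, ← Finset.sum_div, sum_abs_pow_three_sub_eq hk (by simp [lamellarHeight])
    (by simp [lamellarHeight]) (by rw [hvar]; norm_num), lamellarDefect_lamellarHeight hk]
  ring

/-- For a mean-zero `±1`-valued `u` on `(0,1)` with at most `k` jumps,
`∫₀¹ w² ≥ 1/(12k²)` where `w(y) = ∫₀^y u`, with equality iff `u = ±u_k` a.e. -/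
theorem stmt5 (k : ℕ) (hk : 1 ≤ k)
    (u : ℝ → ℝ) (huval : ∀ s ∈ Set.Ioo (0 : ℝ) 1, u s = 1 ∨ u s = -1)
    (t : ℕ → ℝ) (ht0 : t 0 = 0) (htlast : t (k + 1) = 1)
    (htmono : ∀ i, i ≤ k → t i ≤ t (i + 1))
    (hconst : ∀ i, i ≤ k → ∀ x ∈ Set.Ioo (t i) (t (i + 1)),
      ∀ y ∈ Set.Ioo (t i) (t (i + 1)), u x = u y)
    (hmean : ∫ s in (0 : ℝ)..1, u s = 0)
    (w : ℝ → ℝ) (hw : ∀ y, w y = ∫ s in (0 : ℝ)..y, u s) :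
    (∫ y in (0 : ℝ)..1, (w y) ^ 2) ≥ 1 / (12 * (k : ℝ) ^ 2) ∧
    ((∫ y in (0 : ℝ)..1, (w y) ^ 2) = 1 / (12 * (k : ℝ) ^ 2) ↔
      (∀ᵐ s ∂(volume.restrict (Set.Ioo (0 : ℝ) 1)), u s = uk k s) ∨
      (∀ᵐ s ∂(volume.restrict (Set.Ioo (0 : ℝ) 1)), u s = - uk k s)) := by
  have hP : IsStepPartition (k + 1) t u :=
    ⟨fun i hi => htmono i (by omega), fun i hi => hconst i (by omega)⟩
  have hu : ∀ s ∈ Ioo (t 0) (t (k + 1)), |u s| = 1 := fun s hs => by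
    rw [ht0, htlast] at hs
    rcases huval s hs with h | h <;> simp [h]
  set e : ℕ → ℝ := fun j => ∫ s in t 0..t j, u s
  have he0 : e 0 = 0 := integral_same
  have helast : e (k + 1) = 0 := by simp [e, ht0, htlast, hmean]
  have henergy : ∫ y in (0 : ℝ)..1, w y ^ 2 = (1 / (4 * k ^ 2) + lamellarDefect k e) / 3 := by
    rw [← sum_abs_pow_three_sub_eq hk he0 helast ((hP.sum_abs_primitive_succ_sub hu).trans
      (by rw [htlast, ht0, sub_zero])), Finset.sum_div, ← hP.integral_sq_primitive hu, ht0, htlast]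
    simp only [hw]
  have h12 : 1 / (12 * (k : ℝ) ^ 2) = 1 / (4 * k ^ 2) / 3 := by ring
  refine ⟨?_, fun heq => ?_, ?_⟩
  · linarith [lamellarDefect_nonneg k e]
  · obtain ⟨σ, hσ, he⟩ :=
      exists_eq_mul_lamellarHeight_of_lamellarDefect_eq_zero hk he0 helast (by linarith)
    have hae := hP.ae_eq_mul_of_primitive_eq (isStepPartition_uk hk) hu (fun s _ => abs_uk k s)
      hσ (by rw [ht0, lamellarNode_zero]) fun j hj => by
        rw [integral_uk_lamellarNode hk]; exact he j hj
    rw [ht0, htlast] at hae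
    rcases (abs_eq zero_le_one).1 hσ with rfl | rfl
    · exact Or.inl (by simpa using hae)
    · exact Or.inr (by simpa using hae)
  · simp only [hw]
    rintro (h | h)
    · rw [integral_sq_primitive_eq_sq_mul (v := uk k) (σ := 1) zero_le_one (by simpa using h),
        one_pow, one_mul, integral_sq_primitive_uk hk]
    · rw [integral_sq_primitive_eq_sq_mul (v := uk k) (σ := -1) zero_le_one (by simpa using h),
        neg_one_sq, one_mul, integral_sq_primitive_uk hk]
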